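/- arXiv:2505.00793 — 2 statements merged into one kernel-verified Lean document; each statement's English description precedes it below -/
import Mathlib

section
/- Let Φ : ℝ^P × ℝ^M → ℝ^P be continuously differentiable (ContDiff ℝ 1), let θ₀ ∈ ℝ^P, and for each η ∈ ℝ^M define θ_0(η) = θ₀ and θ_{i+1}(η) = Φ (θ_i(η), η). Let V : ℝ^P → ℝ be differentiable at θ_T(η). Fix η and write A_i := fderiv ℝ (fun t => Φ (t, η)) (θ_i(η)) and B_i := fderiv ℝ (fun η' => Φ (θ_i(η), η')) η. Then the outer objective η' ↦ V (θ_T(η')) is differentiable at η with fderiv ℝ (fun η' => V (θ_T(η'))) η = ∑_{i=0}^{T-1} (fderiv ℝ V (θ_T(η))) ∘ (A_{T-1} ∘ ⋯ ∘ A_{i+1}) ∘ B_i, where the composition A_{T-1} ∘ ⋯ ∘ A_{i+1} is the identity when i = T-1. -/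
/-!
Differentiating the recursion `θ (i + 1) η = Φ (θ i η, η)` by the chain rule gives the
forward-mode recursion `θ'_{i+1} = A_i ∘ θ'_i + B_i` with `θ'_0 = 0`; unrolling it, the
contribution of `B_i` is propagated by `A_{T-1} ∘ ⋯ ∘ A_{i+1}`, and a final chain rule through
`V` gives the meta-gradient.
-/

/-- `chainComp A i j` is the ordered composition `A (j-1) ∘ A (j-2) ∘ ⋯ ∘ A i`
of continuous linear maps, equal to the identity when `j ≤ i`. -/
noncomputable def chainComp {F : Type*} [NormedAddCommGroup F] [NormedSpace ℝ F]
    (A : ℕ → (F →L[ℝ] F)) (i : ℕ) : ℕ → (F →L[ℝ] F)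
  | 0 => ContinuousLinearMap.id ℝ F
  | (j + 1) =>
      if j + 1 ≤ i then ContinuousLinearMap.id ℝ F
      else (A j).comp (chainComp A i j)

open ContinuousLinearMap Finset

section ChainComp

variable {F : Type*} [NormedAddCommGroup F] [NormedSpace ℝ F] (A : ℕ → F →L[ℝ] F)

theorem chainComp_of_le {i j : ℕ} (h : j ≤ i) : chainComp A i j = .id ℝ F := by
  cases j with
  | zero => rfl
  | succ j => exact if_pos h

theorem chainComp_succ_of_le {i j : ℕ} (h : i ≤ j) :
    chainComp A i (j + 1) = (A j).comp (chainComp A i j) :=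
  if_neg (by omega)

theorem sum_chainComp_comp_succ {G : Type*} [NormedAddCommGroup G] [NormedSpace ℝ G]
    (B : ℕ → G →L[ℝ] F) (T : ℕ) :
    ∑ i ∈ range (T + 1), (chainComp A (i + 1) (T + 1)).comp (B i) =
      (A T).comp (∑ i ∈ range T, (chainComp A (i + 1) T).comp (B i)) + B T := by
  rw [sum_range_succ, chainComp_of_le A le_rfl, id_comp, comp_finsetSum]
  congr 1
  refine sum_congr rfl fun i hi => ?_
  rw [chainComp_succ_of_le A (mem_range.mp hi), comp_assoc]

end ChainComp

theorem HasFDerivAt.comp_prodMk_self {𝕜 E F G : Type*} [NontriviallyNormedField 𝕜]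
    [NormedAddCommGroup E] [NormedSpace 𝕜 E] [NormedAddCommGroup F] [NormedSpace 𝕜 F]
    [NormedAddCommGroup G] [NormedSpace 𝕜 G] {Φ : E × F → G} {g : F → E} {D : F →L[𝕜] E}
    {y : F} (hg : HasFDerivAt g D y) (hΦ : DifferentiableAt 𝕜 Φ (g y, y)) :
    HasFDerivAt (fun y' => Φ (g y', y'))
      ((fderiv 𝕜 (fun x => Φ (x, y)) (g y)).comp D + fderiv 𝕜 (fun y' => Φ (g y, y')) y) y := by
  have hL := hΦ.hasFDerivAt
  have h_left : fderiv 𝕜 (fun x => Φ (x, y)) (g y) = (fderiv 𝕜 Φ (g y, y)).comp (inl 𝕜 E F) :=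
    (hL.comp (g y) (hasFDerivAt_prodMk_left (g y) y)).fderiv
  have h_right : fderiv 𝕜 (fun y' => Φ (g y, y')) y = (fderiv 𝕜 Φ (g y, y)).comp (inr 𝕜 E F) :=
    (hL.comp y (hasFDerivAt_prodMk_right (g y) y)).fderiv
  rw [h_left, h_right]
  refine (hL.comp (f := fun y' => (g y', y')) y (hg.prodMk (hasFDerivAt_id y))).congr_fderiv ?_
  ext v
  exact (comp_inl_add_comp_inr (fderiv 𝕜 Φ (g y, y)) (D v, v)).symm

theorem hasFDerivAt_unrolled_iterate {E F : Type*} [NormedAddCommGroup E] [NormedSpace ℝ E]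
    [NormedAddCommGroup F] [NormedSpace ℝ F] {Φ : E × F → E} {θ : ℕ → F → E} {θ₀ : E}
    (hθ0 : ∀ η, θ 0 η = θ₀) (hθs : ∀ i η, θ (i + 1) η = Φ (θ i η, η)) {η : F}
    (hΦ : ∀ i, DifferentiableAt ℝ Φ (θ i η, η)) (T : ℕ) :
    HasFDerivAt (θ T)
      (∑ i ∈ range T, (chainComp (fun j => fderiv ℝ (fun t => Φ (t, η)) (θ j η)) (i + 1) T).comp
        (fderiv ℝ (fun η' => Φ (θ i η, η')) η)) η := by
  induction T with
  | zero =>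
    rw [funext hθ0]
    exact hasFDerivAt_const θ₀ η
  | succ T ih =>
    rw [funext (hθs T), sum_chainComp_comp_succ]
    exact ih.comp_prodMk_self (hΦ T)

/-- the total meta-gradient `dV/dη` of the validation loss `V`
through `T` unrolled inner updates `Φ` (truncated backpropagation through
time): with `A i := ∂Φ/∂θ` and `B i := ∂Φ/∂η` at the `i`-th iterate, the outer
objective `η' ↦ V (θ T η')` is differentiable at `η` with derivative
`∑_{i=0}^{T-1} dV/dθ_T ∘ (A_{T-1} ∘ ⋯ ∘ A_{i+1}) ∘ B_i`. -/
theorem stmt10 (P M : ℕ)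
    (Φ : EuclideanSpace ℝ (Fin P) × EuclideanSpace ℝ (Fin M) → EuclideanSpace ℝ (Fin P))
    (hΦ : ContDiff ℝ 1 Φ)
    (θ₀ : EuclideanSpace ℝ (Fin P))
    (θ : ℕ → EuclideanSpace ℝ (Fin M) → EuclideanSpace ℝ (Fin P))
    (hθ0 : ∀ η, θ 0 η = θ₀)
    (hθs : ∀ i η, θ (i + 1) η = Φ (θ i η, η))
    (η : EuclideanSpace ℝ (Fin M)) (T : ℕ)
    (V : EuclideanSpace ℝ (Fin P) → ℝ)
    (hV : DifferentiableAt ℝ V (θ T η)) :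
    DifferentiableAt ℝ (fun η' => V (θ T η')) η ∧
    fderiv ℝ (fun η' => V (θ T η')) η =
      ∑ i ∈ Finset.range T,
        ((fderiv ℝ V (θ T η)).comp
          (chainComp (fun j => fderiv ℝ (fun t => Φ (t, η)) (θ j η)) (i + 1) T)).comp
          (fderiv ℝ (fun η' => Φ (θ i η, η')) η) := by
  have hθT := hasFDerivAt_unrolled_iterate hθ0 hθs (η := η)
    (fun i => (hΦ.differentiable one_ne_zero).differentiableAt) T
  have hVθT := hV.hasFDerivAt.comp η hθT
  exact ⟨hVθT.differentiableAt, hVθT.fderiv.trans (comp_finsetSum _ _)⟩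
end

section
/- Let L : ℝ^P × ℝ^M → ℝ be twice continuously differentiable (ContDiff ℝ 2), let α ∈ ℝ, and let θ : ℝ^M → ℝ^P be differentiable at η ∈ ℝ^M. Define the one-step gradient-descent update θ⁺ : ℝ^M → ℝ^P by θ⁺(η') = θ(η') - α • gradient (fun t => L (t, η')) (θ(η')). Then θ⁺ is differentiable at η and fderiv ℝ θ⁺ η = (id - α • H) ∘ (fderiv ℝ θ η) - α • X, where H := fderiv ℝ (fun t => gradient (fun s => L (s, η)) t) (θ η) is the Hessian ∂²L/∂θ² at (θ η, η), X := fderiv ℝ (fun η' => gradient (fun t => L (t, η')) (θ η)) η is the mixed second derivative ∂²L/∂η∂θ at (θ η, η), and id is the identity continuous linear map on ℝ^P. -/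
/-! The update is `θ - α • G ∘ (θ, id)` with `G (t, η') = ∇ₜ L (t, η')`. Over `ℝ`, `G` is the Riesz
representative of the first partial derivative of the `C¹` map `fderiv ℝ L`, hence differentiable,
and the chain rule along the graph `η' ↦ (θ η', η')` splits its derivative into the partial
derivative in `t` (the Hessian) composed with `dθ`, plus the partial derivative in `η'` (the mixed
second derivative). -/

open ContinuousLinearMap InnerProductSpace

section PartialDerivatives

variable {𝕜 E F G : Type*} [NontriviallyNormedField 𝕜]
  [NormedAddCommGroup E] [NormedSpace 𝕜 E] [NormedAddCommGroup F] [NormedSpace 𝕜 F]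
  [NormedAddCommGroup G] [NormedSpace 𝕜 G]
  {f : E × F → G} {f' : E × F →L[𝕜] G} {e : E} {y : F}

theorem HasFDerivAt.comp_prodMk_left (hf : HasFDerivAt f f' (e, y)) :
    HasFDerivAt (fun x => f (x, y)) (f'.comp (inl 𝕜 E F)) e :=
  hf.comp e (hasFDerivAt_prodMk_left e y)

theorem HasFDerivAt.comp_prodMk_right (hf : HasFDerivAt f f' (e, y)) :
    HasFDerivAt (fun z => f (e, z)) (f'.comp (inr 𝕜 E F)) y :=
  hf.comp y (hasFDerivAt_prodMk_right e y)

theorem HasFDerivAt.comp_prodMk_self_s11 {g : F → E} {g' : F →L[𝕜] E}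
    (hf : HasFDerivAt f f' (g y, y)) (hg : HasFDerivAt g g' y) :
    HasFDerivAt (fun z => f (g z, z)) ((f'.comp (inl 𝕜 E F)).comp g' + f'.comp (inr 𝕜 E F)) y := by
  refine (HasFDerivAt.comp (g := f) (f := fun z => (g z, z)) y hf
    (hg.prodMk (hasFDerivAt_id y))).congr_fderiv ?_
  ext v
  simp [← map_add]

end PartialDerivatives

section PartialGradient

variable {E F : Type*} [NormedAddCommGroup E] [InnerProductSpace ℝ E] [CompleteSpace E]
  [NormedAddCommGroup F] [NormedSpace ℝ F] {L : E × F → ℝ}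

theorem gradient_comp_prodMk_left {p : E × F} (hL : DifferentiableAt ℝ L p) :
    gradient (fun s => L (s, p.2)) p.1 = (toDual ℝ E).symm ((fderiv ℝ L p).comp (inl ℝ E F)) := by
  rw [gradient, hL.hasFDerivAt.comp_prodMk_left.fderiv]

theorem ContDiff.gradient_comp_prodMk_left {n : WithTop ℕ∞} (hL : ContDiff ℝ (n + 1) L) :
    ContDiff ℝ n fun p : E × F => gradient (fun s => L (s, p.2)) p.1 := by
  have hL' : Differentiable ℝ L := hL.differentiable (by simp)
  simp_rw [_root_.gradient_comp_prodMk_left (hL' _)]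
  -- over `ℝ` the conjugate-linear Riesz map is linear
  exact ((toDual ℝ E).symm.toContinuousLinearEquiv : StrongDual ℝ E ≃L[ℝ] E).contDiff.comp
    ((hL.fderiv_right le_rfl).clm_comp contDiff_const)

end PartialGradient

/-- Equation (5) of the paper for a plain gradient-descent inner
update with meta-dependent loss: if `θ⁺(η') = θ(η') - α • ∇_θ L(θ(η'), η')`,
then `θ⁺` is differentiable at `η` with
`dθ⁺/dη = (id - α • ∂²L/∂θ²) ∘ dθ/dη - α • ∂²L/∂η∂θ`, where both second
derivatives are taken at `(θ η, η)`. -/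
theorem stmt11 (P M : ℕ)
    (L : EuclideanSpace ℝ (Fin P) × EuclideanSpace ℝ (Fin M) → ℝ)
    (hL : ContDiff ℝ 2 L) (α : ℝ)
    (θ : EuclideanSpace ℝ (Fin M) → EuclideanSpace ℝ (Fin P))
    (η : EuclideanSpace ℝ (Fin M))
    (hθ : DifferentiableAt ℝ θ η)
    (θplus : EuclideanSpace ℝ (Fin M) → EuclideanSpace ℝ (Fin P))
    (hdef : ∀ η', θplus η' = θ η' - α • gradient (fun t => L (t, η')) (θ η')) :
    DifferentiableAt ℝ θplus η ∧
    fderiv ℝ θplus η =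
      ((ContinuousLinearMap.id ℝ (EuclideanSpace ℝ (Fin P)) -
          α • fderiv ℝ (fun t => gradient (fun s => L (s, η)) t) (θ η)).comp
        (fderiv ℝ θ η)) -
      α • fderiv ℝ (fun η' => gradient (fun t => L (t, η')) (θ η)) η := by
  have hG := ((hL.gradient_comp_prodMk_left (n := 1)).differentiable one_ne_zero
    (θ η, η)).hasFDerivAt
  have hplus : HasFDerivAt (fun η' => θ η' - α • gradient (fun t => L (t, η')) (θ η')) _ η :=
    hθ.hasFDerivAt.sub ((hG.comp_prodMk_self_s11 hθ.hasFDerivAt).const_smul α)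
  rw [← funext hdef] at hplus
  refine ⟨hplus.differentiableAt, ?_⟩
  rw [hplus.fderiv, hG.comp_prodMk_left.fderiv, hG.comp_prodMk_right.fderiv, sub_comp, smul_comp,
    id_comp, smul_add]
  abel
end
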